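/- Let n and k be positive integers with 1 ≤ k < n, let S_k be a subset of T_k, and let p_k = Σ_{t ∈ S_k} P_bst(t). If X_{n,k} denotes the number of nodes v of a random binary search tree with n leaves whose fringe subtree t(v) belongs to S_k, then E(X_{n,k}) = 2·p_k·n/(k·(k+1)). -/

import Mathlib

open Filter Finset
open scoped Classical

/-- Ordered binary trees: every node has exactly two or no children. -/
inductive BT : Type
  | leaf : BT
  | node : BT → BT → BT
deriving DecidableEq

namespace BT

/-- The size of a binary tree: its number of leaves. -/
def size : BT → ℕ
  | leaf => 1
  | node l r => size l + size r

/-- The multiset of all fringe subtrees of a tree (one for every node). -/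
def fringe : BT → Multiset BT
  | leaf => {leaf}
  | node l r => node l r ::ₘ (fringe l + fringe r)

/-- The finset of all ordered binary trees with `n` leaves. -/
def treesOfSize : ℕ → Finset BT
  | 0 => ∅
  | 1 => {leaf}
  | n + 2 =>
    (Finset.range (n + 1)).attach.biUnion fun k =>
      ((treesOfSize (k.1 + 1)) ×ˢ (treesOfSize (n + 1 - k.1))).image fun p => node p.1 p.2
  decreasing_by
    · have := Finset.mem_range.mp k.2; omega
    · omega

/-- Boolean test whether two ordered binary trees are isomorphic as unordered trees. -/
def isoB : BT → BT → Bool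
  | leaf, leaf => true
  | leaf, node _ _ => false
  | node _ _, leaf => false
  | node l1 r1, node l2 r2 => (isoB l1 l2 && isoB r1 r2) || (isoB l1 r2 && isoB r1 l2)

/-- An injective encoding of ordered binary trees into the natural numbers. -/
def encode : BT → ℕ
  | leaf => 0
  | node l r => Nat.pair (encode l) (encode r) + 1

/-- The canonical representative of the isomorphism class of a binary tree:
two trees are isomorphic (equal as unordered trees) iff their canonical forms agree. -/
def canon : BT → BT
  | leaf => leaf
  | node l r =>
    let l' := canon l
    let r' := canon r
    if encode l' ≤ encode r' then node l' r' else node r' l'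

/-- Number of isomorphism classes of unordered binary trees represented among
the fringe subtrees of `t`. -/
def isoClasses (t : BT) : ℕ := ((fringe t).toFinset.image canon).card

/-- Number of distinct ordered binary trees occurring among the fringe subtrees of `t`. -/
def numDistinct (t : BT) : ℕ := (fringe t).toFinset.card

/-- The probability of a tree under the binary search tree model. -/
noncomputable def pbst (t : BT) : ℝ :=
  ((fringe t).map fun s => if 1 < size s then (1 : ℝ) / ((size s : ℝ) - 1) else 1).prod

/-- Expectation of `f` under the uniform distribution on trees with `n` leaves. -/
noncomputable def unifE (n : ℕ) (f : BT → ℝ) : ℝ :=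
  (∑ t ∈ treesOfSize n, f t) / (treesOfSize n).card

/-- Probability of an event under the uniform distribution on trees with `n` leaves. -/
noncomputable def unifP (n : ℕ) (p : BT → Prop) : ℝ :=
  ((treesOfSize n).filter p).card / (treesOfSize n).card

/-- Expectation of `f` under the binary search tree distribution on trees with `n` leaves. -/
noncomputable def bstE (n : ℕ) (f : BT → ℝ) : ℝ :=
  ∑ t ∈ treesOfSize n, pbst t * f t

/-- Probability of an event under the binary search tree distribution on trees with `n` leaves. -/
noncomputable def bstP (n : ℕ) (p : BT → Prop) : ℝ :=
  ∑ t ∈ (treesOfSize n).filter p, pbst t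

end BT

/-!
In a tree with more than `k` leaves the root is not in `S`, so the count `X` of fringe subtrees
in `S` is additive over the two subtrees of the root. In the BST model a tree with `m + 1` leaves
has a left subtree with `j` leaves (`1 ≤ j ≤ m`) with probability `1 / m`, and given the sizes
both subtrees are independent random BSTs. Hence `E_n = E(X_{n,k})` satisfies
`m E_{m+1} = 2 ∑_{j ≤ m} E_j` for `m ≥ k`, while `E_j = 0` for `j < k` and `E_k = p_k`.
This recurrence gives `∑_{j ≤ m} E_j = p_k m (m + 1) / (k (k + 1))` by induction on `m ≥ k`,
and then `E_{m+1} = 2 p_k (m + 1) / (k (k + 1))`.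
-/

namespace BT

lemma size_pos : ∀ t : BT, 0 < t.size
  | leaf => one_pos
  | node l _ => Nat.add_pos_left (size_pos l) _

lemma mem_treesOfSize {n : ℕ} {t : BT} : t ∈ treesOfSize n ↔ size t = n := by
  induction n using Nat.strong_induction_on generalizing t with
  | _ n ih =>
    match n, t with
    | 0, t => simpa [treesOfSize] using (size_pos t).ne'
    | 1, leaf => simp [treesOfSize, size]
    | 1, node l r =>
      have := size_pos l; have := size_pos r
      simp only [treesOfSize, mem_singleton, reduceCtorEq, size, false_iff]
      omega
    | m + 2, t =>
      rw [treesOfSize]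
      simp only [Finset.mem_biUnion, Finset.mem_attach, Finset.mem_image, Finset.mem_product,
        true_and, Subtype.exists, Finset.mem_range]
      constructor
      · rintro ⟨j, hj, ⟨l, r⟩, ⟨hl, hr⟩, rfl⟩
        dsimp only at hl hr
        rw [ih _ (by omega)] at hl hr
        simp only [size]; omega
      · intro ht
        cases t with
        | leaf => simp [size] at ht
        | node l r =>
          have := size_pos l; have := size_pos r
          simp only [size] at ht
          refine ⟨size l - 1, by omega, ⟨l, r⟩, ⟨?_, ?_⟩, rfl⟩ <;> dsimp only <;>
            rw [ih _ (by omega)] <;> omega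

lemma size_le_of_mem_fringe {s : BT} : ∀ {t : BT}, s ∈ fringe t → size s ≤ size t
  | leaf, hs => by rw [Multiset.mem_singleton.mp hs]
  | node l r, hs => by
    simp only [fringe, Multiset.mem_cons, Multiset.mem_add] at hs
    rcases hs with rfl | hs | hs
    · rfl
    · exact (size_le_of_mem_fringe hs).trans (Nat.le_add_right _ _)
    · exact (size_le_of_mem_fringe hs).trans (Nat.le_add_left _ _)

lemma sum_treesOfSize_add_two {M : Type*} [AddCommMonoid M] (m : ℕ) (g : BT → M) :
    ∑ t ∈ treesOfSize (m + 2), g t =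
      ∑ j ∈ range (m + 1), ∑ l ∈ treesOfSize (j + 1), ∑ r ∈ treesOfSize (m + 1 - j),
        g (node l r) := by
  rw [treesOfSize, sum_biUnion, ← sum_attach (range (m + 1))]
  · refine sum_congr rfl fun j _ => ?_
    rw [sum_image fun _ _ _ _ h => by simpa [Prod.ext_iff] using h, sum_product]
  · intro a _ b _ hab
    simp only [Function.onFun, disjoint_left, mem_image, mem_product, not_exists, not_and]
    rintro _ ⟨⟨l, r⟩, ⟨hl, -⟩, rfl⟩ ⟨l', r'⟩ ⟨hl', -⟩ h
    obtain ⟨rfl, rfl⟩ : l' = l ∧ r' = r := by simpa using h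
    rw [mem_treesOfSize] at hl hl'
    exact hab (Subtype.ext (by omega))

lemma pbst_node_of_size_eq {l r : BT} {m : ℕ} (h : size l + size r = m + 2) :
    pbst (node l r) = ((m : ℝ) + 1)⁻¹ * (pbst l * pbst r) := by
  have hsize : (size (node l r) : ℝ) - 1 = m + 1 := by
    rw [size, h]; push_cast; ring
  simp only [pbst, fringe, Multiset.map_cons, Multiset.prod_cons, Multiset.map_add,
    Multiset.prod_add, if_pos (show 1 < size (node l r) by rw [size, h]; omega), hsize,
    one_div]

lemma sum_pbst_mul_treesOfSize_add_two (m : ℕ) (g : BT → ℝ) :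
    ∑ t ∈ treesOfSize (m + 2), pbst t * g t =
      ((m : ℝ) + 1)⁻¹ * ∑ j ∈ range (m + 1), ∑ l ∈ treesOfSize (j + 1),
        ∑ r ∈ treesOfSize (m + 1 - j), pbst l * pbst r * g (node l r) := by
  rw [sum_treesOfSize_add_two, mul_sum]
  refine sum_congr rfl fun j hj => ?_
  rw [mul_sum]
  refine sum_congr rfl fun l hl => ?_
  rw [mul_sum]
  refine sum_congr rfl fun r hr => ?_
  rw [mem_treesOfSize] at hl hr
  rw [pbst_node_of_size_eq (m := m) (by have := mem_range.mp hj; omega)]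
  ring

lemma sum_pbst_treesOfSize {n : ℕ} (hn : 0 < n) : ∑ t ∈ treesOfSize n, pbst t = 1 := by
  induction n using Nat.strong_induction_on with
  | _ n ih =>
    match n with
    | 1 => simp [treesOfSize, pbst, fringe, size]
    | m + 2 =>
      have := sum_pbst_mul_treesOfSize_add_two m fun _ => 1
      simp only [mul_one, ← sum_mul_sum] at this
      rw [this, sum_congr rfl fun j hj => by
        have := mem_range.mp hj
        rw [ih _ (by omega) (by omega), ih _ (by omega) (by omega)]]
      simp only [mul_one, sum_const, card_range, nsmul_eq_mul]
      push_cast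
      field_simp

lemma bstE_zero (g : BT → ℝ) : bstE 0 g = 0 := by
  simp [bstE, treesOfSize]

lemma sum_sum_pbst_mul_add {a b : ℕ} (ha : 0 < a) (hb : 0 < b) (g : BT → ℝ) :
    ∑ l ∈ treesOfSize a, ∑ r ∈ treesOfSize b, pbst l * pbst r * (g l + g r) =
      bstE a g + bstE b g := by
  simp only [mul_add, sum_add_distrib, bstE]
  congr 1
  · refine sum_congr rfl fun l _ => ?_
    rw [← mul_one (pbst l * g l), ← sum_pbst_treesOfSize hb, mul_sum]
    exact sum_congr rfl fun _ _ => by ring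
  · rw [sum_comm]
    refine sum_congr rfl fun r _ => ?_
    rw [← mul_one (pbst r * g r), ← sum_pbst_treesOfSize ha, mul_sum]
    exact sum_congr rfl fun _ _ => by ring

lemma mul_bstE_succ_of_additive {m : ℕ} (hm : 0 < m) {g : BT → ℝ}
    (hg : ∀ l r, size l + size r = m + 1 → g (node l r) = g l + g r) :
    (m : ℝ) * bstE (m + 1) g = 2 * ∑ j ∈ range (m + 1), bstE j g := by
  obtain ⟨m, rfl⟩ : ∃ m', m = m' + 1 := ⟨m - 1, by omega⟩
  have hsplit : ∀ j ∈ range (m + 1), ∑ l ∈ treesOfSize (j + 1),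
      ∑ r ∈ treesOfSize (m + 1 - j), pbst l * pbst r * g (node l r) =
        bstE (j + 1) g + bstE (m + 1 - j) g := by
    intro j hj
    have := mem_range.mp hj
    rw [← sum_sum_pbst_mul_add (by omega) (by omega)]
    refine sum_congr rfl fun l hl => sum_congr rfl fun r hr => ?_
    rw [mem_treesOfSize] at hl hr
    rw [hg l r (by omega)]
  have hreflect :
      ∑ j ∈ range (m + 1), bstE (m + 1 - j) g = ∑ j ∈ range (m + 1), bstE (j + 1) g := by
    rw [← sum_range_reflect]
    exact sum_congr rfl fun j hj => by
      have := mem_range.mp hj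
      congr 1
      omega
  rw [bstE, sum_pbst_mul_treesOfSize_add_two, sum_congr rfl hsplit, sum_add_distrib, hreflect,
    sum_range_succ' _ (m + 1), bstE_zero, add_zero]
  push_cast
  field_simp
  ring

section countFringe

variable {S : Finset BT}

lemma countP_fringe_of_size_lt {t : BT} (h : ∀ s ∈ S, size t < size s) :
    Multiset.countP (· ∈ S) (fringe t) = 0 :=
  Multiset.countP_eq_zero.2 fun s hs hsS => (size_le_of_mem_fringe hs).not_gt (h s hsS)

lemma countP_fringe_node {l r : BT} (h : node l r ∉ S) :
    Multiset.countP (· ∈ S) (fringe (node l r)) =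
      Multiset.countP (· ∈ S) (fringe l) + Multiset.countP (· ∈ S) (fringe r) := by
  simp [fringe, h]

lemma countP_fringe_of_size_eq {t : BT} (h : ∀ s ∈ S, size s = size t) :
    Multiset.countP (· ∈ S) (fringe t) = if t ∈ S then 1 else 0 := by
  cases t with
  | leaf =>
    show Multiset.countP (· ∈ S) (leaf ::ₘ 0) = _
    rw [Multiset.countP_cons, Multiset.countP_zero, zero_add]
  | node l r =>
    have := size_pos l; have := size_pos r
    have hlt : ∀ u, size u < size (node l r) → Multiset.countP (· ∈ S) (fringe u) = 0 :=
      fun u hu => countP_fringe_of_size_lt fun s hs => (h s hs).symm ▸ hu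
    simp [fringe, Multiset.countP_cons, hlt l (by simp only [size]; omega),
      hlt r (by simp only [size]; omega)]

lemma bstE_countP_fringe_of_lt {n : ℕ} (h : ∀ s ∈ S, n < size s) :
    bstE n (fun t => (Multiset.countP (· ∈ S) (fringe t) : ℝ)) = 0 :=
  sum_eq_zero fun t ht => by
    dsimp only
    rw [countP_fringe_of_size_lt fun s hs => mem_treesOfSize.1 ht ▸ h s hs]
    simp

lemma bstE_countP_fringe_of_subset {k : ℕ} (hS : S ⊆ treesOfSize k) :
    bstE k (fun t => (Multiset.countP (· ∈ S) (fringe t) : ℝ)) = ∑ t ∈ S, pbst t := by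
  have hmem : ∀ t ∈ treesOfSize k, pbst t * (Multiset.countP (· ∈ S) (fringe t) : ℝ) =
      if t ∈ S then pbst t else 0 := fun t ht => by
    rw [countP_fringe_of_size_eq fun s hs => by rw [mem_treesOfSize.1 (hS hs),
      mem_treesOfSize.1 ht]]
    split_ifs <;> simp
  rw [bstE, sum_congr rfl hmem, sum_ite_mem, inter_eq_right.2 hS]

end countFringe

end BT

section recurrence

variable {a : ℕ → ℝ} {k : ℕ}

lemma sum_range_succ_eq_of_mul_eq_two_mul_sum (hk : 0 < k)
    (h : ∀ m, k ≤ m → (m : ℝ) * a (m + 1) = 2 * ∑ j ∈ range (m + 1), a j) {m : ℕ} (hm : k ≤ m) :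
    ∑ j ∈ range (m + 1), a j =
      (∑ j ∈ range (k + 1), a j) * (m * (m + 1)) / (k * (k + 1)) := by
  have : (k : ℝ) ≠ 0 := by positivity
  induction m, hm using Nat.le_induction with
  | base => field_simp
  | succ m hm ih =>
    have hm0 : (m : ℝ) ≠ 0 := by have := hk.trans_le hm; positivity
    have ha : a (m + 1) = 2 * (∑ j ∈ range (k + 1), a j) * (m + 1) / (k * (k + 1)) :=
      mul_left_cancel₀ hm0 (by rw [h m hm, ih]; ring)
    rw [sum_range_succ, ih, ha]
    push_cast
    ring

lemma apply_succ_eq_of_mul_eq_two_mul_sum (hk : 0 < k)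
    (h : ∀ m, k ≤ m → (m : ℝ) * a (m + 1) = 2 * ∑ j ∈ range (m + 1), a j) {m : ℕ} (hm : k ≤ m) :
    a (m + 1) = 2 * (∑ j ∈ range (k + 1), a j) * (m + 1) / (k * (k + 1)) := by
  have hm0 : (m : ℝ) ≠ 0 := by have := hk.trans_le hm; positivity
  exact mul_left_cancel₀ hm0 (by rw [h m hm, sum_range_succ_eq_of_mul_eq_two_mul_sum hk h hm]; ring)

end recurrence

open BT in
/-- For positive integers `1 ≤ k < n` and any `S_k ⊆ T_k` with
`p_k = Σ_{t ∈ S_k} P_bst(t)`, the expected number of fringe subtrees belonging to `S_k`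
in a random binary search tree with `n` leaves equals `2·p_k·n/(k·(k+1))`. -/
theorem expected_fringe_occurrences_bst
    (n k : ℕ) (hk : 0 < k) (hkn : k < n) (S : Finset BT) (hS : S ⊆ treesOfSize k) :
    bstE n (fun t => (Multiset.countP (· ∈ S) (fringe t) : ℝ))
      = 2 * (∑ t ∈ S, pbst t) * (n : ℝ) / ((k : ℝ) * ((k : ℝ) + 1)) := by
  set a : ℕ → ℝ := fun n => bstE n (fun t => (Multiset.countP (· ∈ S) (fringe t) : ℝ))
  have hsize : ∀ s ∈ S, size s = k := fun s hs => mem_treesOfSize.1 (hS hs)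
  have hrec : ∀ m, k ≤ m → (m : ℝ) * a (m + 1) = 2 * ∑ j ∈ range (m + 1), a j :=
    fun m hm => mul_bstE_succ_of_additive (hk.trans_le hm) fun l r hlr => by
      have hnotMem : node l r ∉ S := fun h => by
        have := hsize _ h; simp only [size] at this; omega
      push_cast [countP_fringe_node hnotMem]
      rfl
  have hinit : ∑ j ∈ range (k + 1), a j = ∑ t ∈ S, pbst t := by
    rw [sum_range_succ, sum_eq_zero fun j hj => bstE_countP_fringe_of_lt fun s hs =>
      hsize s hs ▸ mem_range.1 hj, zero_add]
    exact bstE_countP_fringe_of_subset hS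
  obtain ⟨m, rfl⟩ : ∃ m, n = m + 1 := ⟨n - 1, by omega⟩
  rw [show bstE (m + 1) _ = a (m + 1) from rfl,
    apply_succ_eq_of_mul_eq_two_mul_sum hk hrec (by omega), hinit]
  push_cast
  ring
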